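/- Corollary (failure of stable stretching for u^L = (-x1, x2, 0)): for the curve η^L(t) = (r e^t, r e^{-t}, x3) with r > 0, the quantity ∂_z(κ |∂_t η^L|²) = 2κ ∂_t|∂_t η^L| + (∂_z κ)|∂_t η^L|² equals -tanh(2t)/cosh(2t), which is nonzero whenever t ≠ 0. -/

import Mathlib

/-!
Since `cosh ^ (3/2) * √cosh = cosh ^ 2`, the stretching term `2 κ ∂_t|∂_t η^L|` equals
`2 tanh(2t) / cosh(2t)`, while the curvature-variation term `(∂_z κ) |∂_t η^L|²` equals
`-3 tanh(2t) / cosh(2t)`; their sum `-tanh(2t) / cosh(2t)` vanishes only where `sinh(2t)` does.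
-/

namespace Real

lemma rpow_three_halves_eq_mul_sqrt {x : ℝ} (hx : 0 ≤ x) : x ^ ((3 : ℝ) / 2) = x * √x := by
  rw [show (3 : ℝ) / 2 = 1 / 2 + 1 by norm_num, rpow_add_one' hx (by norm_num), ← sqrt_eq_rpow,
    mul_comm]

lemma tanh_ne_zero {x : ℝ} (hx : x ≠ 0) : tanh x ≠ 0 := by
  rw [tanh_eq_sinh_div_cosh]
  exact div_ne_zero (sinh_ne_zero.mpr hx) (cosh_pos x).ne'

lemma neg_tanh_div_cosh_ne_zero {x : ℝ} (hx : x ≠ 0) : -tanh x / cosh x ≠ 0 :=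
  div_ne_zero (neg_ne_zero.mpr (tanh_ne_zero hx)) (cosh_pos x).ne'

end Real

open Real

lemma stretching_rate_eq_neg_tanh_div_cosh {r : ℝ} (hr : r ≠ 0) (x : ℝ) :
    2 * (1 / (√2 * r * cosh x ^ ((3 : ℝ) / 2))) * (√2 * r * sinh x / √(cosh x))
      + (-3 * tanh x / (2 * r ^ 2 * cosh x ^ 2)) * (2 * r ^ 2 * cosh x)
      = -tanh x / cosh x := by
  have hc : 0 < cosh x := cosh_pos x
  have hstretch : 2 * (1 / (√2 * r * cosh x ^ ((3 : ℝ) / 2))) * (√2 * r * sinh x / √(cosh x))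
      = 2 * tanh x / cosh x := by
    rw [rpow_three_halves_eq_mul_sqrt hc.le, tanh_eq_sinh_div_cosh]
    field_simp
    rw [sq_sqrt hc.le]
  have hcurv : (-3 * tanh x / (2 * r ^ 2 * cosh x ^ 2)) * (2 * r ^ 2 * cosh x)
      = -3 * tanh x / cosh x := by
    field_simp
  rw [hstretch, hcurv]
  ring

/-- Corollary: failure of stable stretching for
`u^L = (-x1, x2, 0)`: for `η^L(t) = (r e^t, r e^{-t}, x3)` with `r > 0`,
`∂_z(κ |∂_t η^L|²) = 2 κ ∂_t|∂_t η^L| + (∂_z κ) |∂_t η^L|²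
  = -tanh(2t)/cosh(2t)`, which is nonzero whenever `t ≠ 0`. -/
theorem failure_of_stable_stretching
    (r : ℝ) (hr : 0 < r) :
    ∀ t : ℝ,
      2 * (1 / (Real.sqrt 2 * r * (Real.cosh (2 * t)) ^ ((3 : ℝ) / 2)))
          * (Real.sqrt 2 * r * Real.sinh (2 * t) / Real.sqrt (Real.cosh (2 * t)))
        + (-3 * Real.tanh (2 * t) / (2 * r ^ 2 * (Real.cosh (2 * t)) ^ 2))
          * (2 * r ^ 2 * Real.cosh (2 * t))
        = -Real.tanh (2 * t) / Real.cosh (2 * t) ∧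
      (t ≠ 0 → -Real.tanh (2 * t) / Real.cosh (2 * t) ≠ 0) := fun t =>
  ⟨stretching_rate_eq_neg_tanh_div_cosh hr.ne' (2 * t),
    fun ht => neg_tanh_div_cosh_ne_zero (mul_ne_zero two_ne_zero ht)⟩
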